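/- Let X, Y, A be jointly distributed random variables with finite ranges. If I(X:Y) = 0 and I(X:Y | A) = 0, then for all values a, x, y: p(a,x)·p(a,y)·p(x,y) = p(a)·p(x)·p(y)·p(a,x,y), and in particular condition (B) holds: p(a,x) > 0 and p(a,y) > 0 imply p(a,x,y) > 0. -/
import Mathlib


open Finset

noncomputable section

/-- Probability of an event under a distribution on a finite sample space. -/
def pr {Ω : Type*} [Fintype Ω] (p : Ω → ℝ) (E : Set Ω) : ℝ :=
  ∑ ω, E.indicator p ω

/-- `p` is a probability mass function on the finite sample space `Ω`. -/
def IsPMF {Ω : Type*} [Fintype Ω] (p : Ω → ℝ) : Prop :=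
  (∀ ω, 0 ≤ p ω) ∧ ∑ ω, p ω = 1

/-- Shannon entropy (base 2) of a random variable `V` on a finite sample space. -/
def ent {Ω β : Type*} [Fintype Ω] [Fintype β] (p : Ω → ℝ) (V : Ω → β) : ℝ :=
  -∑ v, pr p {ω | V ω = v} * Real.logb 2 (pr p {ω | V ω = v})

/-- Conditional Shannon entropy (base 2): `H(V | W)`. -/
def condEnt {Ω β γ : Type*} [Fintype Ω] [Fintype β] [Fintype γ]
    (p : Ω → ℝ) (V : Ω → β) (W : Ω → γ) : ℝ :=
  ent p (fun ω => (V ω, W ω)) - ent p W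

/-- Mutual information (base 2): `I(V : W)`. -/
def mi {Ω β γ : Type*} [Fintype Ω] [Fintype β] [Fintype γ]
    (p : Ω → ℝ) (V : Ω → β) (W : Ω → γ) : ℝ :=
  ent p V + ent p W - ent p (fun ω => (V ω, W ω))

/-- Conditional mutual information (base 2): `I(V : W | U)`. -/
def cmi {Ω β γ δ : Type*} [Fintype Ω] [Fintype β] [Fintype γ] [Fintype δ]
    (p : Ω → ℝ) (V : Ω → β) (W : Ω → γ) (U : Ω → δ) : ℝ :=
  ent p (fun ω => (V ω, U ω)) + ent p (fun ω => (W ω, U ω))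
    - ent p (fun ω => (V ω, W ω, U ω)) - ent p U

end

section Helpers

variable {Ω β γ δ : Type*} [Fintype Ω] [Fintype β] [Fintype γ] [Fintype δ]

lemma pr_congr (p : Ω → ℝ) {E F : Set Ω} (h : ∀ ω, ω ∈ E ↔ ω ∈ F) :
    pr p E = pr p F := by
  have : E = F := Set.ext h
  rw [this]

lemma pr_eq_sum_ite (p : Ω → ℝ) (P : Ω → Prop) [DecidablePred P] :
    pr p {ω | P ω} = ∑ ω, if P ω then p ω else 0 := by
  classical
  refine Finset.sum_congr rfl fun ω _ => ?_
  rw [Set.indicator_apply]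
  simp [Set.mem_setOf_eq]

lemma pr_nonneg (p : Ω → ℝ) (hp : ∀ ω, 0 ≤ p ω) (E : Set Ω) : 0 ≤ pr p E :=
  Finset.sum_nonneg fun ω _ => Set.indicator_nonneg (fun a _ => hp a) ω

lemma pr_mono (p : Ω → ℝ) (hp : ∀ ω, 0 ≤ p ω) {E F : Set Ω} (h : E ⊆ F) :
    pr p E ≤ pr p F :=
  Finset.sum_le_sum fun ω _ => Set.indicator_le_indicator_of_subset h hp ω

lemma sum_pr_fiber (p : Ω → ℝ) (P : Ω → Prop) (W : Ω → β) :
    ∑ b, pr p {ω | P ω ∧ W ω = b} = pr p {ω | P ω} := by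
  classical
  simp only [pr_eq_sum_ite]
  rw [Finset.sum_comm]
  refine Finset.sum_congr rfl fun ω _ => ?_
  by_cases h : P ω
  · simp [h]
  · simp [h]

lemma sum_pr_eq_one (p : Ω → ℝ) (hp : IsPMF p) (V : Ω → β) :
    ∑ b, pr p {ω | V ω = b} = 1 := by
  classical
  simp only [pr_eq_sum_ite]
  rw [Finset.sum_comm]
  rw [← hp.2]
  refine Finset.sum_congr rfl fun ω _ => ?_
  simp

lemma ent_mul_log (p : Ω → ℝ) (V : Ω → β) :
    ent p V * Real.log 2 = -∑ v, pr p {ω | V ω = v} * Real.log (pr p {ω | V ω = v}) := by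
  have h2 : Real.log 2 ≠ 0 := ne_of_gt (Real.log_pos (by norm_num))
  unfold ent
  rw [neg_mul, Finset.sum_mul]
  congr 1
  refine Finset.sum_congr rfl fun v _ => ?_
  rw [Real.logb, mul_assoc, div_mul_cancel₀ _ h2]

lemma sum_rotate (f : β → γ → δ → ℝ) :
    ∑ u, ∑ b, ∑ c, f b c u = ∑ b, ∑ c, ∑ u, f b c u := by
  rw [Finset.sum_comm]
  exact Finset.sum_congr rfl fun b _ => Finset.sum_comm

/-- Gibbs' inequality, equality case. -/
lemma gibbs {ι : Type*} [Fintype ι] (x y : ι → ℝ) (hx : ∀ i, 0 ≤ x i) (hy : ∀ i, 0 ≤ y i)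
    (hxy : ∀ i, 0 < x i → 0 < y i) (hsum : ∑ i, y i ≤ ∑ i, x i)
    (hzero : ∑ i, x i * (Real.log (x i) - Real.log (y i)) = 0) : ∀ i, x i = y i := by
  set g : ι → ℝ := fun i => x i * (Real.log (x i) - Real.log (y i)) - (x i - y i) with hg
  have key : ∀ i, 0 ≤ g i ∧ (g i = 0 → x i = y i) := by
    intro i
    rcases eq_or_lt_of_le (hx i) with h0 | h0
    · constructor
      · simp [hg, ← h0, hy i]
      · intro h
        simp only [hg, ← h0, zero_mul, zero_sub, sub_neg_eq_add, zero_add] at h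
        rw [← h0, h]
    · have hyi : 0 < y i := hxy i h0
      have hlog : Real.log (y i / x i) ≤ y i / x i - 1 :=
        Real.log_le_sub_one_of_pos (div_pos hyi h0)
      have hld : Real.log (y i / x i) = Real.log (y i) - Real.log (x i) :=
        Real.log_div (ne_of_gt hyi) (ne_of_gt h0)
      constructor
      · have := mul_le_mul_of_nonneg_left hlog (le_of_lt h0)
        rw [hld] at this
        have hxne : x i ≠ 0 := ne_of_gt h0
        simp only [hg]
        have : x i * (Real.log (y i) - Real.log (x i)) ≤ y i - x i := by
          calc x i * (Real.log (y i) - Real.log (x i)) ≤ x i * (y i / x i - 1) := this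
          _ = y i - x i := by field_simp
        nlinarith [this]
      · intro hgi
        by_contra hne
        have ht : y i / x i ≠ 1 := by
          intro h
          apply hne
          field_simp at h
          linarith
        have hstrict : Real.log (y i / x i) < y i / x i - 1 := by
          have hlt : Real.log (y i / x i) + 1 < y i / x i := by
            have := Real.add_one_lt_exp (x := Real.log (y i / x i)) ?_
            · rwa [Real.exp_log (div_pos hyi h0)] at this
            · intro h
              apply ht
              have := Real.exp_log (div_pos hyi h0)
              rw [h, Real.exp_zero] at this
              exact this.symm
          linarith
        have := mul_lt_mul_of_pos_left hstrict h0
        rw [hld] at this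
        have h2 : x i * (Real.log (y i) - Real.log (x i)) < y i - x i := by
          calc x i * (Real.log (y i) - Real.log (x i)) < x i * (y i / x i - 1) := this
          _ = y i - x i := by field_simp
        simp only [hg] at hgi
        nlinarith [h2, hgi]
  have hsum_g : ∑ i, g i ≤ 0 := by
    simp only [hg]
    rw [Finset.sum_sub_distrib, hzero, Finset.sum_sub_distrib]
    linarith
  have hall : ∀ i ∈ Finset.univ, g i = 0 := by
    have hnn : ∀ i ∈ Finset.univ, 0 ≤ g i := fun i _ => (key i).1
    have : ∑ i, g i = 0 := le_antisymm hsum_g (Finset.sum_nonneg hnn)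
    intro i hi
    exact ((Finset.sum_eq_zero_iff_of_nonneg hnn).1 this) i hi
  intro i
  exact (key i).2 (hall i (Finset.mem_univ i))

/-- I(V:W)=0 implies independence. -/
lemma mi_indep (p : Ω → ℝ) (hp : IsPMF p) (V : Ω → β) (W : Ω → γ)
    (h : mi p V W = 0) :
    ∀ b c, pr p {ω | V ω = b ∧ W ω = c} = pr p {ω | V ω = b} * pr p {ω | W ω = c} := by
  classical
  set q : β → γ → ℝ := fun b c => pr p {ω | V ω = b ∧ W ω = c} with hq
  set qV : β → ℝ := fun b => pr p {ω | V ω = b} with hqV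
  set qW : γ → ℝ := fun c => pr p {ω | W ω = c} with hqW
  have hqnn : ∀ b c, 0 ≤ q b c := fun b c => pr_nonneg p hp.1 _
  have hqVnn : ∀ b, 0 ≤ qV b := fun b => pr_nonneg p hp.1 _
  have hqWnn : ∀ c, 0 ≤ qW c := fun c => pr_nonneg p hp.1 _
  have marg1 : ∀ b, ∑ c, q b c = qV b := fun b => sum_pr_fiber p (fun ω => V ω = b) W
  have marg2 : ∀ c, ∑ b, q b c = qW c := by
    intro c
    simp only [hq, hqW]
    rw [← sum_pr_fiber p (fun ω => W ω = c) V]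
    exact Finset.sum_congr rfl fun b _ => pr_congr p (fun ω => by simp [and_comm])
  have hqleV : ∀ b c, q b c ≤ qV b := fun b c =>
    pr_mono p hp.1 (fun ω hω => hω.1)
  have hqleW : ∀ b c, q b c ≤ qW c := fun b c =>
    pr_mono p hp.1 (fun ω hω => hω.2)
  -- joint entropy set rewrite
  have hpair : ∀ b c, pr p {ω | (V ω, W ω) = (b, c)} = q b c := fun b c =>
    pr_congr p (fun ω => by simp [Prod.ext_iff])
  -- key sum
  have hS : ∑ b, ∑ c, q b c * (Real.log (q b c) - Real.log (qV b) - Real.log (qW c)) = 0 := by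
    have e1 : ∑ b, ∑ c, q b c * Real.log (qV b) = ∑ b, qV b * Real.log (qV b) := by
      refine Finset.sum_congr rfl fun b _ => ?_
      rw [← Finset.sum_mul, marg1]
    have e2 : ∑ b, ∑ c, q b c * Real.log (qW c) = ∑ c, qW c * Real.log (qW c) := by
      rw [Finset.sum_comm]
      refine Finset.sum_congr rfl fun c _ => ?_
      rw [← Finset.sum_mul, marg2]
    have e3 : ent p (fun ω => (V ω, W ω)) * Real.log 2
        = -∑ b, ∑ c, q b c * Real.log (q b c) := by
      rw [ent_mul_log, Fintype.sum_prod_type]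
      congr 1
      refine Finset.sum_congr rfl fun b _ => Finset.sum_congr rfl fun c _ => ?_
      rw [hpair]
    have e4 : ent p V * Real.log 2 = -∑ b, qV b * Real.log (qV b) := ent_mul_log p V
    have e5 : ent p W * Real.log 2 = -∑ c, qW c * Real.log (qW c) := ent_mul_log p W
    have hmi : (ent p V + ent p W - ent p (fun ω => (V ω, W ω))) * Real.log 2 = 0 := by
      rw [show ent p V + ent p W - ent p (fun ω => (V ω, W ω)) = mi p V W from rfl, h,
        zero_mul]
    calc ∑ b, ∑ c, q b c * (Real.log (q b c) - Real.log (qV b) - Real.log (qW c))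
        = ∑ b, ∑ c, (q b c * Real.log (q b c) - q b c * Real.log (qV b)
            - q b c * Real.log (qW c)) := by
          refine Finset.sum_congr rfl fun b _ => Finset.sum_congr rfl fun c _ => by ring
      _ = (∑ b, ∑ c, q b c * Real.log (q b c)) - (∑ b, ∑ c, q b c * Real.log (qV b))
            - (∑ b, ∑ c, q b c * Real.log (qW c)) := by
          simp [Finset.sum_sub_distrib]
      _ = 0 := by
          rw [e1, e2]
          have := hmi
          rw [sub_mul, add_mul] at this
          rw [e3, e4, e5] at this
          linarith
  -- apply Gibbs with x = q, y = qV * qW over the product type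
  have := gibbs (fun i : β × γ => q i.1 i.2) (fun i : β × γ => qV i.1 * qW i.2)
    (fun i => hqnn i.1 i.2) (fun i => mul_nonneg (hqVnn i.1) (hqWnn i.2))
    (fun i hi => mul_pos (lt_of_lt_of_le hi (hqleV i.1 i.2))
      (lt_of_lt_of_le hi (hqleW i.1 i.2)))
    (by
      refine le_of_eq ?_
      rw [Fintype.sum_prod_type, Fintype.sum_prod_type]
      show ∑ b, ∑ c, qV b * qW c = ∑ b, ∑ c, q b c
      have hL : ∑ b, ∑ c, qV b * qW c = 1 := by
        rw [← sum_pr_eq_one p hp V]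
        refine Finset.sum_congr rfl fun b _ => ?_
        rw [← Finset.mul_sum, sum_pr_eq_one p hp W, mul_one]
      have hR : ∑ b, ∑ c, q b c = 1 := by
        rw [show ∑ b, ∑ c, q b c = ∑ b, qV b from
          Finset.sum_congr rfl fun b _ => marg1 b]
        exact sum_pr_eq_one p hp V
      rw [hL, hR])
    (by
      rw [Fintype.sum_prod_type]
      show ∑ b, ∑ c, q b c * (Real.log (q b c) - Real.log (qV b * qW c)) = 0
      rw [← hS]
      refine Finset.sum_congr rfl fun b _ => Finset.sum_congr rfl fun c _ => ?_
      rcases eq_or_lt_of_le (hqnn b c) with h0 | h0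
      · rw [← h0]; ring
      · have hv : 0 < qV b := lt_of_lt_of_le h0 (hqleV b c)
        have hw : 0 < qW c := lt_of_lt_of_le h0 (hqleW b c)
        rw [Real.log_mul (ne_of_gt hv) (ne_of_gt hw)]
        ring)
  intro b c
  exact this (b, c)

/-- I(V:W|U)=0 implies conditional independence. -/
lemma cmi_condIndep (p : Ω → ℝ) (hp : IsPMF p) (V : Ω → β) (W : Ω → γ) (U : Ω → δ)
    (h : cmi p V W U = 0) :
    ∀ b c u, pr p {ω | V ω = b ∧ W ω = c ∧ U ω = u} * pr p {ω | U ω = u}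
      = pr p {ω | V ω = b ∧ U ω = u} * pr p {ω | W ω = c ∧ U ω = u} := by
  classical
  set r : β → γ → δ → ℝ := fun b c u => pr p {ω | V ω = b ∧ W ω = c ∧ U ω = u} with hr
  set rVU : β → δ → ℝ := fun b u => pr p {ω | V ω = b ∧ U ω = u} with hrVU
  set rWU : γ → δ → ℝ := fun c u => pr p {ω | W ω = c ∧ U ω = u} with hrWU
  set rU : δ → ℝ := fun u => pr p {ω | U ω = u} with hrU
  have hrnn : ∀ b c u, 0 ≤ r b c u := fun b c u => pr_nonneg p hp.1 _
  have hVUnn : ∀ b u, 0 ≤ rVU b u := fun b u => pr_nonneg p hp.1 _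
  have hWUnn : ∀ c u, 0 ≤ rWU c u := fun c u => pr_nonneg p hp.1 _
  have hUnn : ∀ u, 0 ≤ rU u := fun u => pr_nonneg p hp.1 _
  have margV : ∀ b u, ∑ c, r b c u = rVU b u := by
    intro b u
    simp only [hr, hrVU]
    rw [← sum_pr_fiber p (fun ω => V ω = b ∧ U ω = u) W]
    exact Finset.sum_congr rfl fun c _ => pr_congr p (fun ω => by simp only [Set.mem_setOf_eq]; tauto)
  have margW : ∀ c u, ∑ b, r b c u = rWU c u := by
    intro c u
    simp only [hr, hrWU]
    rw [← sum_pr_fiber p (fun ω => W ω = c ∧ U ω = u) V]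
    exact Finset.sum_congr rfl fun b _ => pr_congr p (fun ω => by simp only [Set.mem_setOf_eq]; tauto)
  have margUV : ∀ u, ∑ b, rVU b u = rU u := by
    intro u
    simp only [hrVU, hrU]
    rw [← sum_pr_fiber p (fun ω => U ω = u) V]
    exact Finset.sum_congr rfl fun b _ => pr_congr p (fun ω => by simp only [Set.mem_setOf_eq]; tauto)
  have margUW : ∀ u, ∑ c, rWU c u = rU u := by
    intro u
    simp only [hrWU, hrU]
    rw [← sum_pr_fiber p (fun ω => U ω = u) W]
    exact Finset.sum_congr rfl fun c _ => pr_congr p (fun ω => by simp only [Set.mem_setOf_eq]; tauto)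
  have hrleVU : ∀ b c u, r b c u ≤ rVU b u := fun b c u =>
    pr_mono p hp.1 (fun ω hω => ⟨hω.1, hω.2.2⟩)
  have hrleWU : ∀ b c u, r b c u ≤ rWU c u := fun b c u =>
    pr_mono p hp.1 (fun ω hω => ⟨hω.2.1, hω.2.2⟩)
  have hVUleU : ∀ b u, rVU b u ≤ rU u := fun b u =>
    pr_mono p hp.1 (fun ω hω => hω.2)
  have hWUleU : ∀ c u, rWU c u ≤ rU u := fun c u =>
    pr_mono p hp.1 (fun ω hω => hω.2)
  -- the y function
  set Yf : β → γ → δ → ℝ := fun b c u => rVU b u * rWU c u / rU u with hYf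
  -- key sum equals cmi * log 2 = 0
  have hS : ∑ u, ∑ b, ∑ c,
      r b c u * (Real.log (r b c u) + Real.log (rU u)
        - Real.log (rVU b u) - Real.log (rWU c u)) = 0 := by
    have e1 : ∑ u, ∑ b, ∑ c, r b c u * Real.log (rVU b u)
        = ∑ b, ∑ u, rVU b u * Real.log (rVU b u) := by
      rw [Finset.sum_comm]
      refine Finset.sum_congr rfl fun b _ => Finset.sum_congr rfl fun u _ => ?_
      rw [← Finset.sum_mul, margV]
    have e2 : ∑ u, ∑ b, ∑ c, r b c u * Real.log (rWU c u)
        = ∑ c, ∑ u, rWU c u * Real.log (rWU c u) := by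
      rw [show ∑ u, ∑ b, ∑ c, r b c u * Real.log (rWU c u)
          = ∑ c, ∑ u, ∑ b, r b c u * Real.log (rWU c u) by
        rw [show ∑ u, ∑ b, ∑ c, r b c u * Real.log (rWU c u)
            = ∑ u, ∑ c, ∑ b, r b c u * Real.log (rWU c u) from
          Finset.sum_congr rfl fun u _ => Finset.sum_comm]
        exact Finset.sum_comm]
      refine Finset.sum_congr rfl fun c _ => Finset.sum_congr rfl fun u _ => ?_
      rw [← Finset.sum_mul, margW]
    have e3 : ∑ u, ∑ b, ∑ c, r b c u * Real.log (rU u)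
        = ∑ u, rU u * Real.log (rU u) := by
      refine Finset.sum_congr rfl fun u _ => ?_
      simp only [← Finset.sum_mul]
      congr 1
      rw [show ∑ b, ∑ c, r b c u = ∑ b, rVU b u from
        Finset.sum_congr rfl fun b _ => margV b u, margUV]
    -- entropies
    have eVU : ent p (fun ω => (V ω, U ω)) * Real.log 2
        = -∑ b, ∑ u, rVU b u * Real.log (rVU b u) := by
      rw [ent_mul_log, Fintype.sum_prod_type]
      congr 1
      refine Finset.sum_congr rfl fun b _ => Finset.sum_congr rfl fun u _ => ?_
      rw [pr_congr p (F := {ω | V ω = b ∧ U ω = u}) (fun ω => by simp [Prod.ext_iff])]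
    have eWU : ent p (fun ω => (W ω, U ω)) * Real.log 2
        = -∑ c, ∑ u, rWU c u * Real.log (rWU c u) := by
      rw [ent_mul_log, Fintype.sum_prod_type]
      congr 1
      refine Finset.sum_congr rfl fun c _ => Finset.sum_congr rfl fun u _ => ?_
      rw [pr_congr p (F := {ω | W ω = c ∧ U ω = u}) (fun ω => by simp [Prod.ext_iff])]
    have eVWU : ent p (fun ω => (V ω, W ω, U ω)) * Real.log 2
        = -∑ b, ∑ c, ∑ u, r b c u * Real.log (r b c u) := by
      rw [ent_mul_log, Fintype.sum_prod_type]
      congr 1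
      refine Finset.sum_congr rfl fun b _ => ?_
      rw [Fintype.sum_prod_type]
      refine Finset.sum_congr rfl fun c _ => Finset.sum_congr rfl fun u _ => ?_
      rw [pr_congr p (F := {ω | V ω = b ∧ W ω = c ∧ U ω = u}) (fun ω => by simp [Prod.ext_iff])]
    have eU : ent p U * Real.log 2 = -∑ u, rU u * Real.log (rU u) := ent_mul_log p U
    have hcmi : (ent p (fun ω => (V ω, U ω)) + ent p (fun ω => (W ω, U ω))
        - ent p (fun ω => (V ω, W ω, U ω)) - ent p U) * Real.log 2 = 0 := by
      rw [show ent p (fun ω => (V ω, U ω)) + ent p (fun ω => (W ω, U ω))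
        - ent p (fun ω => (V ω, W ω, U ω)) - ent p U = cmi p V W U from rfl, h, zero_mul]
    have expand : ∑ u, ∑ b, ∑ c,
        r b c u * (Real.log (r b c u) + Real.log (rU u)
          - Real.log (rVU b u) - Real.log (rWU c u))
        = (∑ u, ∑ b, ∑ c, r b c u * Real.log (r b c u))
          + (∑ u, ∑ b, ∑ c, r b c u * Real.log (rU u))
          - (∑ u, ∑ b, ∑ c, r b c u * Real.log (rVU b u))
          - (∑ u, ∑ b, ∑ c, r b c u * Real.log (rWU c u)) := by
      simp only [← Finset.sum_add_distrib, ← Finset.sum_sub_distrib]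
      refine Finset.sum_congr rfl fun u _ => Finset.sum_congr rfl fun b _ =>
        Finset.sum_congr rfl fun c _ => by ring
    rw [expand, e1, e2, e3]
    rw [sum_rotate (fun b c u => r b c u * Real.log (r b c u))]
    rw [sub_mul, sub_mul, add_mul] at hcmi
    rw [eVU, eWU, eVWU, eU] at hcmi
    linarith
  -- Gibbs over β × γ × δ
  have main := gibbs (fun i : β × γ × δ => r i.1 i.2.1 i.2.2)
    (fun i : β × γ × δ => Yf i.1 i.2.1 i.2.2)
    (fun i => hrnn _ _ _)
    (fun i => div_nonneg (mul_nonneg (hVUnn _ _) (hWUnn _ _)) (hUnn _))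
    (fun i hi => by
      have h1 : 0 < rVU i.1 i.2.2 := lt_of_lt_of_le hi (hrleVU _ _ _)
      have h2 : 0 < rWU i.2.1 i.2.2 := lt_of_lt_of_le hi (hrleWU _ _ _)
      have h3 : 0 < rU i.2.2 := lt_of_lt_of_le h1 (hVUleU _ _)
      exact div_pos (mul_pos h1 h2) h3)
    (by
      -- sum y = sum x
      refine le_of_eq ?_
      simp only [Fintype.sum_prod_type]
      show ∑ b, ∑ c, ∑ u, Yf b c u = ∑ b, ∑ c, ∑ u, r b c u
      have hy : ∀ u : δ, ∑ b, ∑ c, Yf b c u = ∑ b, ∑ c, r b c u := by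
        intro u
        have hxsum : ∑ b, ∑ c, r b c u = rU u := by
          rw [show ∑ b, ∑ c, r b c u = ∑ b, rVU b u from
            Finset.sum_congr rfl fun b _ => margV b u, margUV]
        rcases eq_or_lt_of_le (hUnn u) with h0 | h0
        · have : ∀ b c, Yf b c u = 0 := by
            intro b c
            simp only [hYf]
            rw [← h0, div_zero]
          have hx0 : ∀ b c, r b c u = 0 := by
            intro b c
            have h4 : r b c u ≤ rU u := le_trans (hrleVU b c u) (hVUleU b u)
            have h5 := hrnn b c u
            linarith
          simp only [this, hx0, Finset.sum_const_zero]
        · have : ∑ b, ∑ c, Yf b c u = rU u := by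
            simp only [hYf]
            rw [show ∑ b, ∑ c, rVU b u * rWU c u / rU u
                = (∑ b, rVU b u) * (∑ c, rWU c u) / rU u by
              rw [Finset.sum_mul, Finset.sum_div]
              refine Finset.sum_congr rfl fun b _ => ?_
              rw [Finset.mul_sum, Finset.sum_div]]
            rw [margUW, margUV]
            field_simp
          rw [this, hxsum]
      rw [← sum_rotate (fun b c u => Yf b c u), ← sum_rotate (fun b c u => r b c u)]
      exact Finset.sum_congr rfl fun u _ => hy u)
    (by
      simp only [Fintype.sum_prod_type]
      show ∑ b, ∑ c, ∑ u, r b c u * (Real.log (r b c u) - Real.log (Yf b c u)) = 0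
      rw [← sum_rotate (fun b c u => r b c u * (Real.log (r b c u) - Real.log (Yf b c u)))]
      rw [← hS]
      refine Finset.sum_congr rfl fun u _ => Finset.sum_congr rfl fun b _ =>
        Finset.sum_congr rfl fun c _ => ?_
      rcases eq_or_lt_of_le (hrnn b c u) with h0 | h0
      · rw [← h0]; ring
      · have h1 : 0 < rVU b u := lt_of_lt_of_le h0 (hrleVU _ _ _)
        have h2 : 0 < rWU c u := lt_of_lt_of_le h0 (hrleWU _ _ _)
        have h3 : 0 < rU u := lt_of_lt_of_le h1 (hVUleU _ _)
        simp only [hYf]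
        rw [Real.log_div (ne_of_gt (mul_pos h1 h2)) (ne_of_gt h3),
          Real.log_mul (ne_of_gt h1) (ne_of_gt h2)]
        ring)
  intro b c u
  have := main (b, c, u)
  simp only [hYf] at this
  rcases eq_or_lt_of_le (hUnn u) with h0 | h0
  · have hrVU0 : rVU b u = 0 := le_antisymm (h0 ▸ hVUleU b u) (hVUnn b u)
    have hr0 : r b c u = 0 := le_antisymm (hrVU0 ▸ hrleVU b c u) (hrnn b c u)
    rw [show pr p {ω | V ω = b ∧ W ω = c ∧ U ω = u} = r b c u from rfl,
      show pr p {ω | V ω = b ∧ U ω = u} = rVU b u from rfl, hr0, hrVU0]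
    ring
  · have : r b c u * rU u = rVU b u * rWU c u := by
      rw [this]
      field_simp
    exact this

end Helpers

/-- If `I(X:Y) = 0` and `I(X:Y|A) = 0` then
`p(a,x)p(a,y)p(x,y) = p(a)p(x)p(y)p(a,x,y)` for all `a,x,y`; in particular
condition (B) holds. -/
theorem stmt_13 {Ω α χ υ : Type*} [Fintype Ω] [Fintype α] [Fintype χ] [Fintype υ]
    (p : Ω → ℝ) (hp : IsPMF p) (A : Ω → α) (X : Ω → χ) (Y : Ω → υ)
    (h1 : mi p X Y = 0) (h2 : cmi p X Y A = 0) :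
    ∀ (a : α) (x : χ) (y : υ),
      (pr p {ω | A ω = a ∧ X ω = x} * pr p {ω | A ω = a ∧ Y ω = y}
          * pr p {ω | X ω = x ∧ Y ω = y} =
        pr p {ω | A ω = a} * pr p {ω | X ω = x} * pr p {ω | Y ω = y}
          * pr p {ω | A ω = a ∧ X ω = x ∧ Y ω = y}) ∧
      (0 < pr p {ω | A ω = a ∧ X ω = x} →
       0 < pr p {ω | A ω = a ∧ Y ω = y} →
       0 < pr p {ω | A ω = a ∧ X ω = x ∧ Y ω = y}) := by
  intro a x y
  have hindep := mi_indep p hp X Y h1 x y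
  have hcond := cmi_condIndep p hp X Y A h2 x y a
  -- reorder sets
  have hAX : pr p {ω | A ω = a ∧ X ω = x} = pr p {ω | X ω = x ∧ A ω = a} :=
    pr_congr p (fun ω => by simp only [Set.mem_setOf_eq]; tauto)
  have hAY : pr p {ω | A ω = a ∧ Y ω = y} = pr p {ω | Y ω = y ∧ A ω = a} :=
    pr_congr p (fun ω => by simp only [Set.mem_setOf_eq]; tauto)
  have hAXY : pr p {ω | A ω = a ∧ X ω = x ∧ Y ω = y}
      = pr p {ω | X ω = x ∧ Y ω = y ∧ A ω = a} :=
    pr_congr p (fun ω => by simp only [Set.mem_setOf_eq]; tauto)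
  have key : pr p {ω | A ω = a ∧ X ω = x ∧ Y ω = y} * pr p {ω | A ω = a}
      = pr p {ω | A ω = a ∧ X ω = x} * pr p {ω | A ω = a ∧ Y ω = y} := by
    rw [hAXY, hAX, hAY]
    exact hcond
  constructor
  · rw [hindep, ← key]; ring
  · intro hx hy
    have hprod : 0 < pr p {ω | A ω = a ∧ X ω = x} * pr p {ω | A ω = a ∧ Y ω = y} :=
      mul_pos hx hy
    rw [← key] at hprod
    rcases (pr_nonneg p hp.1 {ω | A ω = a ∧ X ω = x ∧ Y ω = y}).eq_or_lt with h0 | h0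
    · rw [← h0, zero_mul] at hprod; exact absurd hprod (lt_irrefl 0)
    · exact h0
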